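/- For all N, h ∈ ℕ, A⁺_{N,h} = ⋃_{b,ℓ∈ℚ} ⋂_{M∈ℕ} D^M_{b,ℓ}. -/

import Mathlib

open Set Filter Topology
open scoped Classical

noncomputable section

/-- The interval `[x, b)` as a subset of `ℝ`, where `b : EReal` may be `+∞`. -/
def Dom (x : ℝ) (b : EReal) : Set ℝ := {t : ℝ | x ≤ t ∧ (t : EReal) < b}

/-- `φ` solves `φ' = F(t, φ(t))`, `φ(x) = y` on `[x, b)` (at `x` the right derivative;
since `F` is continuous this automatically makes `φ` continuously differentiable). -/
def PSol (F : C(ℝ × ℝ, ℝ)) (x y : ℝ) (b : EReal) (φ : ℝ → ℝ) : Prop :=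
  (x : EReal) < b ∧ φ x = y ∧
    ∀ t ∈ Dom x b, HasDerivWithinAt φ (F (t, φ t)) (Dom x b) t

/-- `φ ∈ S⁺_{F,(x,y)}` with domain `[x, b)`: a solution which is non-extendible to the
right, i.e. admits no extension to a solution on a strictly larger interval `[x, b')`. -/
def SolPlus (F : C(ℝ × ℝ, ℝ)) (x y : ℝ) (b : EReal) (φ : ℝ → ℝ) : Prop :=
  PSol F x y b φ ∧
    ∀ (b' : EReal) (ψ : ℝ → ℝ), b < b' → (∀ t ∈ Dom x b, ψ t = φ t) →
      ¬ PSol F x y b' ψ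

/-- The filter `t → b⁻` on `ℝ` (equal to `atTop` when `b = ⊤`). -/
def leftLim (b : EReal) : Filter ℝ :=
  Filter.comap (fun t : ℝ => (t : EReal)) (nhdsWithin b (Iio b))

/-- `lim₊ φ = +∞` for `φ` with domain `[x, b)`. -/
def LimPlusTop (φ : ℝ → ℝ) (b : EReal) : Prop := Tendsto φ (leftLim b) atTop

/-- `lim₊ φ = -∞` for `φ` with domain `[x, b)`. -/
def LimPlusBot (φ : ℝ → ℝ) (b : EReal) : Prop := Tendsto φ (leftLim b) atBot

/-- `‖φ ↾ [x, c]‖_∞ ≤ h`. -/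
def SupNormLe (φ : ℝ → ℝ) (x c h : ℝ) : Prop := ∀ t ∈ Icc x c, |φ t| ≤ h

/-- `A⁺_{N,h}`: the Cauchy problems with a solution having a vertical asymptote to `+∞`
at some `ξ > x + N` and bounded by `h` on `[x, x+N]`. -/
def Aplus (N h : ℕ) : Set (C(ℝ × ℝ, ℝ) × ℝ × ℝ) :=
  {p | ∃ (ξ : ℝ) (φ : ℝ → ℝ), p.2.1 + N < ξ ∧ SolPlus p.1 p.2.1 p.2.2 (ξ : EReal) φ ∧
    LimPlusTop φ (ξ : EReal) ∧ SupNormLe φ p.2.1 (p.2.1 + N) h}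

/-- `A⁻_{N,h}`: as `A⁺_{N,h}`, with `lim₊ φ = -∞` instead of `lim₊ φ = +∞`. -/
def Aminus (N h : ℕ) : Set (C(ℝ × ℝ, ℝ) × ℝ × ℝ) :=
  {p | ∃ (ξ : ℝ) (φ : ℝ → ℝ), p.2.1 + N < ξ ∧ SolPlus p.1 p.2.1 p.2.2 (ξ : EReal) φ ∧
    LimPlusBot φ (ξ : EReal) ∧ SupNormLe φ p.2.1 (p.2.1 + N) h}

/-- `A⁺_N`: the Cauchy problems with a solution having a vertical asymptote to `+∞`
at some `ξ > x + N`. -/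
def AplusN (N : ℕ) : Set (C(ℝ × ℝ, ℝ) × ℝ × ℝ) :=
  {p | ∃ (ξ : ℝ) (φ : ℝ → ℝ), p.2.1 + N < ξ ∧ SolPlus p.1 p.2.1 p.2.2 (ξ : EReal) φ ∧
    LimPlusTop φ (ξ : EReal)}

/-- `A⁻_N`: as `A⁺_N`, with `lim₊ φ = -∞` instead of `lim₊ φ = +∞`. -/
def AminusN (N : ℕ) : Set (C(ℝ × ℝ, ℝ) × ℝ × ℝ) :=
  {p | ∃ (ξ : ℝ) (φ : ℝ → ℝ), p.2.1 + N < ξ ∧ SolPlus p.1 p.2.1 p.2.2 (ξ : EReal) φ ∧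
    LimPlusBot φ (ξ : EReal)}

/-- `B^M_{N,h}`: the Cauchy problems with a solution defined (at least) on `[x, x+M]`
and bounded by `h` on `[x, x+N]`. -/
def Bset (M N h : ℕ) : Set (C(ℝ × ℝ, ℝ) × ℝ × ℝ) :=
  {p | ∃ (b : EReal) (φ : ℝ → ℝ), SolPlus p.1 p.2.1 p.2.2 b φ ∧
    ((p.2.1 + M : ℝ) : EReal) < b ∧ SupNormLe φ p.2.1 (p.2.1 + N) h}

/-- `D^M_{b,ℓ}` (for fixed `N, h`): the set of `(F, x, y)` for which there are `r ∈ ℝ`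
and `φ ∈ S⁺_{F,(x,y)}` with `x+N ≤ r ≤ x+N+ℓ`, `‖φ ↾ [x, x+N]‖_∞ ≤ h`, `r ∈ dom(φ)`,
`φ(t) ≥ b` for all `t ∈ [x, r]`, and `φ(r) ≥ M`. -/
def Dset (N h M : ℕ) (b l : ℚ) : Set (C(ℝ × ℝ, ℝ) × ℝ × ℝ) :=
  {p | ∃ (r : ℝ) (c : EReal) (φ : ℝ → ℝ), SolPlus p.1 p.2.1 p.2.2 c φ ∧
    p.2.1 + N ≤ r ∧ r ≤ p.2.1 + N + l ∧ SupNormLe φ p.2.1 (p.2.1 + N) h ∧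
    (r : EReal) < c ∧ (∀ t ∈ Icc p.2.1 r, (b : ℝ) ≤ φ t) ∧ (M : ℝ) ≤ φ r}

lemma Dom_coe (x ξ : ℝ) : Dom x (ξ : EReal) = Ico x ξ := by
  ext t; simp [Dom, Ico, EReal.coe_lt_coe_iff]

lemma leftLim_coe (ξ : ℝ) : leftLim (ξ : EReal) = 𝓝[Iio ξ] ξ := by
  have h1 : (fun t : ℝ => (t : EReal)) ⁻¹' (Iio (ξ : EReal)) = Iio ξ := by
    ext t; simp [EReal.coe_lt_coe_iff]
  rw [leftLim, nhdsWithin, comap_inf, comap_principal, h1,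
    ← EReal.isOpenEmbedding_coe.isInducing.nhds_eq_comap, nhdsWithin]

lemma neBot_nhdsWithin_Iio (ξ : ℝ) : (𝓝[Iio ξ] ξ).NeBot := by infer_instance

/-- Blow-up implies non-extendibility. -/
lemma solPlus_of_blowup (F : C(ℝ × ℝ, ℝ)) (x y ξ : ℝ) (φ : ℝ → ℝ)
    (hP : PSol F x y (ξ : EReal) φ) (hT : Tendsto φ (𝓝[Iio ξ] ξ) atTop) :
    SolPlus F x y (ξ : EReal) φ := by
  refine ⟨hP, ?_⟩
  intro b' ψ hlt hagree hP'
  have hxξ : x < ξ := by exact_mod_cast hP.1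
  have hξmem : ξ ∈ Dom x b' := ⟨hxξ.le, hlt⟩
  have hcont : ContinuousWithinAt ψ (Dom x b') ξ := (hP'.2.2 ξ hξmem).continuousWithinAt
  have hsub : Ico x ξ ⊆ Dom x b' := by
    rintro t ⟨h1, h2⟩
    exact ⟨h1, lt_trans (by exact_mod_cast h2) hlt⟩
  have h2 : Tendsto ψ (𝓝[Ico x ξ] ξ) (𝓝 (ψ ξ)) :=
    hcont.mono_left (nhdsWithin_mono _ hsub)
  rw [nhdsWithin_Ico_eq_nhdsLT hxξ] at h2
  have h3 : Tendsto φ (𝓝[Iio ξ] ξ) (𝓝 (ψ ξ)) := by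
    refine h2.congr' ?_
    filter_upwards [eventually_mem_nhdsWithin,
      eventually_nhdsWithin_of_eventually_nhds (eventually_gt_nhds hxξ)] with t ht hxt
    have : t ∈ Dom x (ξ : EReal) := by rw [Dom_coe]; exact ⟨hxt.le, ht⟩
    exact hagree t this
  have := hT.eventually_ge_atTop (ψ ξ + 1)
  have h4 : ∀ᶠ t in 𝓝[Iio ξ] ξ, φ t < ψ ξ + 1 := h3.eventually (eventually_lt_nhds (by linarith))
  rcases (this.and h4).exists with ⟨t, h5, h6⟩
  linarith

/-- Continuity of a partial solution on compact subintervals. -/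
lemma psol_continuousOn (F : C(ℝ × ℝ, ℝ)) (x y : ℝ) (c : EReal) (φ : ℝ → ℝ)
    (hP : PSol F x y c φ) (r : ℝ) (hrc : (r : EReal) < c) :
    ContinuousOn φ (Icc x r) := by
  intro t ht
  have htD : t ∈ Dom x c := ⟨ht.1, lt_of_le_of_lt (by exact_mod_cast ht.2) hrc⟩
  exact ((hP.2.2 t htD).continuousWithinAt).mono
    (fun s hs => ⟨hs.1, lt_of_le_of_lt (by exact_mod_cast hs.2) hrc⟩)

/-- The integral equation on `[x, r]` for a partial solution. -/
lemma psol_integral (F : C(ℝ × ℝ, ℝ)) (x y : ℝ) (c : EReal) (φ : ℝ → ℝ)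
    (hP : PSol F x y c φ) (r : ℝ) (hrc : (r : EReal) < c) :
    ∀ s ∈ Icc x r, φ s = y + ∫ u in x..s, F (u, φ u) := by
  obtain ⟨d, hrd, hdc⟩ := EReal.exists_between_coe_real hrc
  intro s hs
  have hxs : x ≤ s := hs.1
  have hIccD : Icc x s ⊆ Dom x c := fun u hu =>
    ⟨hu.1, lt_of_le_of_lt (by exact_mod_cast hu.2.trans hs.2) hrc⟩
  have hcont : ContinuousOn φ (Icc x s) :=
    (psol_continuousOn F x y c φ hP r hrc).mono (Icc_subset_Icc_right hs.2)
  have hder : ∀ t ∈ Ioo x s, HasDerivWithinAt φ (F (t, φ t)) (Ioi t) t := by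
    intro t ht
    have htD : t ∈ Dom x c := hIccD ⟨ht.1.le, ht.2.le⟩
    have hmem : Dom x c ∈ 𝓝 t := by
      have hopen : Ioo (x - 1) d ∈ 𝓝 t := by
        refine Ioo_mem_nhds (by linarith [ht.1]) ?_
        have h1 : (t : ℝ) ≤ r := ht.2.le.trans hs.2
        have h2 : (r : EReal) < (d : EReal) := hrd
        have : r < d := by exact_mod_cast h2
        linarith
      refine mem_of_superset (inter_mem hopen (Ici_mem_nhds ht.1)) ?_
      rintro u ⟨hu1, hu2⟩
      have : (u : EReal) < (d : EReal) := by exact_mod_cast hu1.2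
      exact ⟨hu2, lt_trans this hdc⟩
    exact ((hP.2.2 t htD).hasDerivAt hmem).hasDerivWithinAt
  have hFcont : ContinuousOn (fun u => F (u, φ u)) (Icc x s) :=
    F.continuous.comp_continuousOn (continuousOn_id.prodMk hcont)
  have hint : IntervalIntegrable (fun u => F (u, φ u)) MeasureTheory.volume x s :=
    hFcont.intervalIntegrable_of_Icc hxs
  have := intervalIntegral.integral_eq_sub_of_hasDeriv_right_of_le hxs hcont hder hint
  rw [this, hP.2.1]; ring

lemma clamp_mem (a c t : ℝ) (h : a ≤ c) : max a (min t c) ∈ Icc a c :=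
  ⟨le_max_left _ _, max_le h (min_le_right _ _)⟩

lemma clamp_eq (a c t : ℝ) (h1 : a ≤ t) (h2 : t ≤ c) : max a (min t c) = t := by
  rw [min_eq_left h2, max_eq_right h1]

lemma clamp_lip (a c u v : ℝ) : |max a (min u c) - max a (min v c)| ≤ |u - v| := by
  have h1 : |max (min u c) a - max (min v c) a| ≤ |min u c - min v c| :=
    abs_max_sub_max_le_abs _ _ _
  have h2 : |min u c - min v c| ≤ max |u - v| |c - c| := abs_min_sub_min_le_max _ _ _ _
  rw [sub_self, abs_zero, max_eq_left (abs_nonneg (u - v))] at h2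
  calc |max a (min u c) - max a (min v c)| = |max (min u c) a - max (min v c) a| := by
        rw [max_comm a, max_comm a]
    _ ≤ |u - v| := le_trans h1 h2

lemma abs_min_sub_min_le (s a b : ℝ) : |min s a - min s b| ≤ |a - b| := by
  have := abs_min_sub_min_le_max s a s b
  simpa [abs_nonneg] using this

lemma ulim_exists (U : Ultrafilter ℕ) (a : ℕ → ℝ) (lo hi : ℝ)
    (h : ∀ᶠ M in (U : Filter ℕ), a M ∈ Icc lo hi) :
    ∃ l ∈ Icc lo hi, Tendsto a (U : Filter ℕ) (𝓝 l) := by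
  have hle : ↑(U.map a) ≤ 𝓟 (Icc lo hi) := by
    rw [le_principal_iff]
    exact mem_map.2 h
  obtain ⟨l, hl, hle'⟩ := isCompact_Icc.ultrafilter_le_nhds (U.map a) hle
  exact ⟨l, hl, hle'⟩

lemma tendsto_eval (U : Ultrafilter ℕ) (Φ : ℕ → ℝ → ℝ) (g : ℝ → ℝ) (C : ℝ)
    (a : ℕ → ℝ) (a' : ℝ)
    (hLip : ∀ᶠ M in (U : Filter ℕ), ∀ u v : ℝ, |Φ M u - Φ M v| ≤ C * |u - v|)
    (hpt : ∀ u : ℝ, Tendsto (fun M => Φ M u) (U : Filter ℕ) (𝓝 (g u)))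
    (ha : Tendsto a (U : Filter ℕ) (𝓝 a')) :
    Tendsto (fun M => Φ M (a M)) (U : Filter ℕ) (𝓝 (g a')) := by
  rw [tendsto_iff_dist_tendsto_zero]
  have hb : Tendsto (fun M => C * |a M - a'| + dist (Φ M a') (g a')) (U : Filter ℕ) (𝓝 0) := by
    have h1 : Tendsto (fun M => |a M - a'|) (U : Filter ℕ) (𝓝 0) := by
      have := (ha.sub_const a').abs
      simpa using this
    have h2 : Tendsto (fun M => dist (Φ M a') (g a')) (U : Filter ℕ) (𝓝 0) :=
      tendsto_iff_dist_tendsto_zero.1 (hpt a')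
    have := (h1.const_mul C).add h2
    simpa using this
  refine squeeze_zero' (Eventually.of_forall fun M => dist_nonneg) ?_ hb
  filter_upwards [hLip] with M hM
  calc dist (Φ M (a M)) (g a') ≤ dist (Φ M (a M)) (Φ M a') + dist (Φ M a') (g a') :=
        dist_triangle _ _ _
    _ ≤ C * |a M - a'| + dist (Φ M a') (g a') := by
        have := hM (a M) a'
        rw [Real.dist_eq]
        linarith [this]

/-- First hitting time of level `K`, as an `sInf`, with its properties. -/
lemma hit_spec (φ : ℝ → ℝ) (x xN rM H K : ℝ)
    (hcont : ContinuousOn φ (Icc x rM)) (hxN : x ≤ xN) (hNr : xN ≤ rM)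
    (hB : ∀ t ∈ Icc x xN, |φ t| ≤ H) (hK : H < K) (hr : K ≤ φ rM) :
    xN ≤ sInf {t ∈ Icc xN rM | K ≤ φ t} ∧ sInf {t ∈ Icc xN rM | K ≤ φ t} ≤ rM ∧
      φ (sInf {t ∈ Icc xN rM | K ≤ φ t}) = K ∧
      ∀ t ∈ Icc x (sInf {t ∈ Icc xN rM | K ≤ φ t}), φ t ≤ K := by
  set A := {t ∈ Icc xN rM | K ≤ φ t} with hA
  have hAsub : A ⊆ Icc xN rM := fun t ht => ht.1
  have hne : A.Nonempty := ⟨rM, ⟨hNr, le_refl _⟩, hr⟩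
  have hbdd : BddBelow A := ⟨xN, fun t ht => ht.1.1⟩
  have hclosed : IsClosed A := by
    have : A = Icc xN rM ∩ φ ⁻¹' Ici K := by
      ext t; simp only [hA, mem_setOf_eq, mem_inter_iff, mem_preimage, mem_Ici, mem_sep_iff]
    rw [this]
    exact (hcont.mono (Icc_subset_Icc_left hxN)).preimage_isClosed_of_isClosed
      isClosed_Icc isClosed_Ici
  set τ := sInf A with hτ
  have hτA : τ ∈ A := hclosed.csInf_mem hne hbdd
  have h1 : xN ≤ τ := hτA.1.1
  have h2 : τ ≤ rM := hτA.1.2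
  have hbefore : ∀ t, xN ≤ t → t < τ → φ t < K := by
    intro t ht1 ht2
    by_contra hcon
    push_neg at hcon
    have : t ∈ A := ⟨⟨ht1, le_trans ht2.le h2⟩, hcon⟩
    exact absurd (csInf_le hbdd this) (not_le.2 ht2)
  have hNτ : xN < τ := by
    rcases eq_or_lt_of_le h1 with heq | hlt
    · exfalso
      have := hB τ ⟨le_trans hxN h1, heq.symm.le⟩
      have : φ τ ≤ H := le_trans (le_abs_self _) this
      linarith [hτA.2]
    · exact hlt
  have hφτK : φ τ = K := by
    refine le_antisymm ?_ hτA.2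
    have hsub : Ioo xN τ ⊆ Icc x rM := fun t ht =>
      ⟨le_trans hxN ht.1.le, le_trans ht.2.le h2⟩
    have hctw : ContinuousWithinAt φ (Icc x rM) τ := hcont τ ⟨le_trans hxN h1, h2⟩
    have hT : Tendsto φ (𝓝[Ioo xN τ] τ) (𝓝 (φ τ)) :=
      hctw.mono_left (nhdsWithin_mono _ hsub)
    have hNB : (𝓝[Ioo xN τ] τ).NeBot := by
      rw [nhdsWithin_Ioo_eq_nhdsLT hNτ]
      infer_instance
    refine le_of_tendsto hT ?_
    filter_upwards [eventually_mem_nhdsWithin] with t ht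
    exact (hbefore t ht.1.le ht.2).le
  refine ⟨h1, h2, hφτK, ?_⟩
  intro t ht
  rcases le_or_gt t xN with hcase | hcase
  · exact le_trans (le_trans (le_abs_self _) (hB t ⟨ht.1, hcase⟩)) hK.le
  · rcases lt_or_eq_of_le ht.2 with hlt | heq
    · exact (hbefore t hcase.le hlt).le
    · rw [heq, hφτK]

/-- Difference of solution values as an interval integral. -/
lemma sol_diff_integral (G : ℝ → ℝ) (f : ℝ → ℝ) (x y b' : ℝ)
    (hcont : ContinuousOn f (Icc x b'))
    (hint : ∀ s ∈ Icc x b', G s = y + ∫ u in x..s, f u) :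
    ∀ p ∈ Icc x b', ∀ q ∈ Icc x b', G p - G q = ∫ u in q..p, f u := by
  intro p hp q hq
  have h1 : IntervalIntegrable f MeasureTheory.volume x p :=
    (hcont.mono (Icc_subset_Icc_right hp.2)).intervalIntegrable_of_Icc hp.1
  have h2 : IntervalIntegrable f MeasureTheory.volume x q :=
    (hcont.mono (Icc_subset_Icc_right hq.2)).intervalIntegrable_of_Icc hq.1
  rw [hint p hp, hint q hq]
  have := intervalIntegral.integral_interval_sub_left h1 h2
  rw [← this]; ring

/-- A two-point Lipschitz-type bound from the integral equation. -/
lemma sol_two_point (G : ℝ → ℝ) (f : ℝ → ℝ) (x y b' C : ℝ)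
    (hcont : ContinuousOn f (Icc x b'))
    (hint : ∀ s ∈ Icc x b', G s = y + ∫ u in x..s, f u)
    (hbd : ∀ u ∈ Icc x b', |f u| ≤ C) :
    ∀ p ∈ Icc x b', ∀ q ∈ Icc x b', |G p - G q| ≤ C * |p - q| := by
  intro p hp q hq
  rw [sol_diff_integral G f x y b' hcont hint p hp q hq]
  have hsub : Set.uIoc q p ⊆ Icc x b' := by
    rw [uIoc_eq_union]
    rintro u (hu | hu)
    · exact ⟨le_trans hq.1 hu.1.le, le_trans hu.2 hp.2⟩
    · exact ⟨le_trans hp.1 hu.1.le, le_trans hu.2 hq.2⟩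
  have := intervalIntegral.norm_integral_le_of_norm_le_const
    (C := C) (f := f) (a := q) (b := p) (fun u hu => by
      rw [Real.norm_eq_abs]; exact hbd u (hsub hu))
  rw [Real.norm_eq_abs] at this
  exact this

set_option maxHeartbeats 1000000 in
lemma bwd_main (N h : ℕ) (F : C(ℝ × ℝ, ℝ)) (x y : ℝ) (bq lq : ℚ)
    (r : ℕ → ℝ) (c : ℕ → EReal) (φ : ℕ → ℝ → ℝ)
    (hP : ∀ M, PSol F x y (c M) (φ M))
    (hr1 : ∀ M, x + N ≤ r M) (hr2 : ∀ M, r M ≤ x + N + lq)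
    (hSN : ∀ M, ∀ t ∈ Icc x (x + N), |φ M t| ≤ (h : ℝ))
    (hrc : ∀ M, ((r M : ℝ) : EReal) < c M)
    (hlb : ∀ M, ∀ t ∈ Icc x (r M), (bq : ℝ) ≤ φ M t)
    (hub : ∀ M : ℕ, (M : ℝ) ≤ φ M (r M)) :
    ∃ (ξ : ℝ) (ψ : ℝ → ℝ), x + N < ξ ∧ SolPlus F x y (ξ : EReal) ψ ∧
      LimPlusTop ψ (ξ : EReal) ∧ SupNormLe ψ x (x + N) (h : ℝ) := by
  set xN := x + (N : ℝ) with hxNdef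
  set L := x + (N : ℝ) + (lq : ℝ) with hLdef
  set bR := (bq : ℝ) with hbRdef
  have hxxN : x ≤ xN := by
    have : (0 : ℝ) ≤ N := Nat.cast_nonneg N
    simp only [hxNdef]; linarith
  have hNL : xN ≤ L := le_trans (hr1 0) (hr2 0)
  have hxL : x ≤ L := le_trans hxxN hNL
  have hcont : ∀ M, ContinuousOn (φ M) (Icc x (r M)) := fun M =>
    psol_continuousOn F x y (c M) (φ M) (hP M) (r M) (hrc M)
  have hintM : ∀ M, ∀ s ∈ Icc x (r M), φ M s = y + ∫ u in x..s, F (u, φ M u) := fun M =>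
    psol_integral F x y (c M) (φ M) (hP M) (r M) (hrc M)
  have hxr : ∀ M, x ≤ r M := fun M => le_trans hxxN (hr1 M)
  have hyh : |y| ≤ (h : ℝ) := by
    rw [← (hP 0).2.1]; exact hSN 0 x ⟨le_refl x, hxxN⟩
  have hby : bR ≤ y := by
    rw [← (hP 0).2.1]; exact hlb 0 x ⟨le_refl x, hxr 0⟩
  have hbh : bR ≤ (h : ℝ) := le_trans hby (le_trans (le_abs_self y) hyh)
  -- bound for F on boxes
  have hCex : ∀ K : ℕ, ∃ C : ℝ, 0 ≤ C ∧
      ∀ u v : ℝ, u ∈ Icc x L → v ∈ Icc bR (K : ℝ) → |F (u, v)| ≤ C := by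
    intro K
    obtain ⟨C0, hC0⟩ := (isCompact_Icc.prod isCompact_Icc).exists_bound_of_continuousOn
      (s := Icc x L ×ˢ Icc bR (K : ℝ)) F.continuous.continuousOn
    refine ⟨max C0 0, le_max_right _ _, fun u v hu hv => ?_⟩
    have := hC0 (u, v) (mk_mem_prod hu hv)
    rw [Real.norm_eq_abs] at this
    exact le_trans this (le_max_left _ _)
  choose C hC0 hCb using hCex
  -- hitting times
  set τ : ℕ → ℕ → ℝ := fun M K =>
    if h < K ∧ K ≤ M then sInf {t ∈ Icc xN (r M) | (K : ℝ) ≤ φ M t}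
    else (if h < K then r M else xN) with hτdef
  have hτspec : ∀ M K, h < K → K ≤ M →
      xN ≤ τ M K ∧ τ M K ≤ r M ∧ φ M (τ M K) = K ∧
        ∀ t ∈ Icc x (τ M K), φ M t ≤ K := by
    intro M K h1 h2
    have hKcast : (h : ℝ) < (K : ℝ) := by exact_mod_cast h1
    have hKM : (K : ℝ) ≤ φ M (r M) :=
      le_trans (by exact_mod_cast h2 : (K : ℝ) ≤ (M : ℝ)) (hub M)
    have := hit_spec (φ M) x xN (r M) (h : ℝ) (K : ℝ) (hcont M) hxxN (hr1 M)
      (hSN M) hKcast hKM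
    have hτeq : τ M K = sInf {t ∈ Icc xN (r M) | (K : ℝ) ≤ φ M t} := by
      simp only [hτdef]; rw [if_pos ⟨h1, h2⟩]
    rw [hτeq]; exact this
  have hτbd : ∀ M K, xN ≤ τ M K ∧ τ M K ≤ r M := by
    intro M K
    by_cases h1 : h < K ∧ K ≤ M
    · have := hτspec M K h1.1 h1.2; exact ⟨this.1, this.2.1⟩
    · simp only [hτdef, if_neg h1]
      split_ifs
      · exact ⟨hr1 M, le_refl _⟩
      · exact ⟨le_refl _, hr1 M⟩
  have hτmono : ∀ M K K', K ≤ K' → τ M K ≤ τ M K' := by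
    intro M K K' hKK'
    by_cases g1 : h < K
    · by_cases g2 : K ≤ M
      · by_cases g3 : K' ≤ M
        · have e1 : τ M K = sInf {t ∈ Icc xN (r M) | (K : ℝ) ≤ φ M t} := by
            simp only [hτdef]; rw [if_pos ⟨g1, g2⟩]
          have e2 : τ M K' = sInf {t ∈ Icc xN (r M) | (K' : ℝ) ≤ φ M t} := by
            simp only [hτdef]; rw [if_pos ⟨lt_of_lt_of_le g1 hKK', g3⟩]
          rw [e1, e2]
          refine csInf_le_csInf ⟨xN, fun t ht => ht.1.1⟩ ?_ ?_
          · refine ⟨r M, ⟨⟨hr1 M, le_refl _⟩, ?_⟩⟩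
            exact le_trans (by exact_mod_cast g3 : (K' : ℝ) ≤ (M : ℝ)) (hub M)
          · rintro t ⟨ht1, ht2⟩
            exact ⟨ht1, le_trans (by exact_mod_cast hKK' : (K : ℝ) ≤ (K' : ℝ)) ht2⟩
        · have e2 : τ M K' = r M := by
            simp only [hτdef]
            rw [if_neg (fun hcon => g3 hcon.2), if_pos (lt_of_lt_of_le g1 hKK')]
          rw [e2]; exact (hτbd M K).2
      · have g3 : ¬ K' ≤ M := fun hcon => g2 (le_trans hKK' hcon)
        have e1 : τ M K = r M := by
          simp only [hτdef]; rw [if_neg (fun hcon => g2 hcon.2), if_pos g1]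
        have e2 : τ M K' = r M := by
          simp only [hτdef]
          rw [if_neg (fun hcon => g3 hcon.2), if_pos (lt_of_lt_of_le g1 hKK')]
        rw [e1, e2]
    · have e1 : τ M K = xN := by
        simp only [hτdef]; rw [if_neg (fun hcon => g1 hcon.1), if_neg g1]
      rw [e1]; exact (hτbd M K').1
  have hτL : ∀ M K, τ M K ≤ L := fun M K => le_trans (hτbd M K).2 (hr2 M)
  have hxτ : ∀ M K, x ≤ τ M K := fun M K => le_trans hxxN (hτbd M K).1
  -- stopped solutions
  set Φ : ℕ → ℕ → ℝ → ℝ := fun K M t => φ M (max x (min t (τ M K))) with hΦdef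
  have hΦclamp : ∀ K M t, max x (min t (τ M K)) ∈ Icc x (τ M K) := fun K M t =>
    clamp_mem _ _ _ (hxτ M K)
  have hΦcont : ∀ K M, Continuous (Φ K M) := by
    intro K M
    have hc : Continuous (fun t : ℝ => max x (min t (τ M K))) :=
      continuous_const.max (continuous_id.min continuous_const)
    refine (hcont M).comp_continuous hc (fun t => ?_)
    have := hΦclamp K M t
    exact ⟨this.1, le_trans this.2 (hτbd M K).2⟩
  have hΦfacts : ∀ K M, h < K → K ≤ M →
      (∀ t, Φ K M t ∈ Icc bR (K : ℝ)) ∧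
      (∀ u v : ℝ, |Φ K M u - Φ K M v| ≤ C K * |u - v|) ∧
      (∀ t ∈ Icc x (τ M K), Φ K M t = φ M t) ∧
      (∀ s : ℝ, x ≤ s → Φ K M s = y + ∫ u in x..(min s (τ M K)), F (u, Φ K M u)) := by
    intro K M hK hKM
    obtain ⟨hτ1, hτ2, hτK, hτub⟩ := hτspec M K hK hKM
    have hsubr : Icc x (τ M K) ⊆ Icc x (r M) := Icc_subset_Icc_right hτ2
    have hagree : ∀ t ∈ Icc x (τ M K), Φ K M t = φ M t := by
      intro t ht
      simp only [hΦdef]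
      rw [clamp_eq _ _ _ ht.1 ht.2]
    have hval : ∀ t, Φ K M t ∈ Icc bR (K : ℝ) := by
      intro t
      refine ⟨hlb M _ (hsubr (hΦclamp K M t)), hτub _ (hΦclamp K M t)⟩
    have hbd : ∀ u ∈ Icc x (τ M K), |F (u, φ M u)| ≤ C K := by
      intro u hu
      refine hCb K u (φ M u) ⟨hu.1, le_trans hu.2 (hτL M K)⟩
        ⟨hlb M u (hsubr hu), hτub u hu⟩
    have htwo : ∀ p ∈ Icc x (τ M K), ∀ q ∈ Icc x (τ M K),
        |φ M p - φ M q| ≤ C K * |p - q| := by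
      refine sol_two_point (φ M) (fun u => F (u, φ M u)) x y (τ M K) (C K) ?_ ?_ hbd
      · exact F.continuous.comp_continuousOn (continuousOn_id.prodMk ((hcont M).mono hsubr))
      · exact fun s hs => hintM M s (hsubr hs)
    have hlip : ∀ u v : ℝ, |Φ K M u - Φ K M v| ≤ C K * |u - v| := by
      intro u v
      have h1 := htwo _ (hΦclamp K M u) _ (hΦclamp K M v)
      refine le_trans h1 ?_
      exact mul_le_mul_of_nonneg_left (clamp_lip _ _ _ _) (hC0 K)
    refine ⟨hval, hlip, hagree, ?_⟩
    intro s hxs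
    have hmin : x ≤ min s (τ M K) := le_min hxs (hxτ M K)
    have hΦs : Φ K M s = φ M (min s (τ M K)) := by
      simp only [hΦdef]; rw [max_eq_right hmin]
    have hmem : min s (τ M K) ∈ Icc x (r M) :=
      ⟨hmin, le_trans (min_le_right _ _) hτ2⟩
    rw [hΦs, hintM M _ hmem]
    congr 1
    refine intervalIntegral.integral_congr ?_
    intro u hu
    rw [uIcc_of_le hmin] at hu
    have hu' : u ∈ Icc x (τ M K) := ⟨hu.1, le_trans hu.2 (min_le_right _ _)⟩
    show F (u, φ M u) = F (u, Φ K M u)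
    rw [hagree u hu']
  have hΦcompat : ∀ K K' M, h < K → K ≤ K' → K' ≤ M →
      ∀ t, Φ K M t = Φ K' M (max x (min t (τ M K))) := by
    intro K K' M hK hKK' hK'M t
    have h1 : max x (min t (τ M K)) ∈ Icc x (τ M K') :=
      ⟨(hΦclamp K M t).1, le_trans (hΦclamp K M t).2 (hτmono M K K' hKK')⟩
    have : Φ K' M (max x (min t (τ M K))) = φ M (max x (min t (τ M K))) := by
      simp only [hΦdef]; rw [clamp_eq _ _ _ h1.1 h1.2]
    rw [this]
  have hΦτ : ∀ K M, h < K → K ≤ M → Φ K M (τ M K) = K := by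
    intro K M hK hKM
    obtain ⟨hτ1, hτ2, hτK, _⟩ := hτspec M K hK hKM
    have := (hΦfacts K M hK hKM).2.2.1 (τ M K) ⟨hxτ M K, le_refl _⟩
    rw [this, hτK]
  -- ultrafilter limits
  set U := Ultrafilter.of (atTop : Filter ℕ) with hUdef
  have hU : (U : Filter ℕ) ≤ atTop := Ultrafilter.of_le _
  have hUK : ∀ K : ℕ, ∀ᶠ M in (U : Filter ℕ), K ≤ M := fun K => hU (eventually_ge_atTop K)
  have hσex : ∀ K : ℕ, ∃ s ∈ Icc xN L, Tendsto (fun M => τ M K) (U : Filter ℕ) (𝓝 s) :=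
    fun K => ulim_exists U _ xN L (Eventually.of_forall fun M =>
      ⟨(hτbd M K).1, hτL M K⟩)
  choose σ hσmem hσtend using hσex
  have hgex : ∀ (K : ℕ) (t : ℝ), ∃ v : ℝ, h < K →
      v ∈ Icc bR (K : ℝ) ∧ Tendsto (fun M => Φ K M t) (U : Filter ℕ) (𝓝 v) := by
    intro K t
    by_cases hK : h < K
    · obtain ⟨v, hv, htend⟩ := ulim_exists U (fun M => Φ K M t) bR (K : ℝ)
        (by filter_upwards [hUK K] with M hM; exact (hΦfacts K M hK hM).1 t)
      exact ⟨v, fun _ => ⟨hv, htend⟩⟩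
    · exact ⟨0, fun hK' => absurd hK' hK⟩
  choose g hg using hgex
  -- basic facts about the limits
  have hgtend : ∀ (K : ℕ), h < K → ∀ t : ℝ,
      Tendsto (fun M => Φ K M t) (U : Filter ℕ) (𝓝 (g K t)) :=
    fun K hK t => (hg K t hK).2
  have hgmem : ∀ (K : ℕ), h < K → ∀ t : ℝ, g K t ∈ Icc bR (K : ℝ) :=
    fun K hK t => (hg K t hK).1
  have hgx : ∀ K : ℕ, h < K → g K x = y := by
    intro K hK
    refine tendsto_nhds_unique (hgtend K hK x) ?_
    refine Tendsto.congr' ?_ (tendsto_const_nhds (α := ℕ))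
    filter_upwards [hUK K] with M hM
    have hx1 : x ∈ Icc x (τ M K) := ⟨le_refl x, hxτ M K⟩
    rw [(hΦfacts K M hK hM).2.2.1 x hx1, (hP M).2.1]
  have hgh : ∀ K : ℕ, h < K → ∀ t ∈ Icc x xN, |g K t| ≤ (h : ℝ) := by
    intro K hK t ht
    refine le_of_tendsto (hgtend K hK t).abs ?_
    filter_upwards [hUK K] with M hM
    have ht' : t ∈ Icc x (τ M K) := ⟨ht.1, le_trans ht.2 (hτbd M K).1⟩
    rw [(hΦfacts K M hK hM).2.2.1 t ht']
    exact hSN M t ht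
  have hglip : ∀ K : ℕ, h < K → ∀ u v : ℝ, |g K u - g K v| ≤ C K * |u - v| := by
    intro K hK u v
    refine le_of_tendsto ((hgtend K hK u).sub (hgtend K hK v)).abs ?_
    filter_upwards [hUK K] with M hM
    exact (hΦfacts K M hK hM).2.1 u v
  have hgcont : ∀ K : ℕ, h < K → Continuous (g K) := by
    intro K hK
    have : LipschitzWith (Real.toNNReal (C K)) (g K) := by
      refine LipschitzWith.of_dist_le_mul fun u v => ?_
      rw [Real.dist_eq, Real.dist_eq, Real.coe_toNNReal _ (hC0 K)]
      exact hglip K hK u v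
    exact this.continuous
  have hΦlipev : ∀ K : ℕ, h < K → ∀ᶠ M in (U : Filter ℕ),
      ∀ u v : ℝ, |Φ K M u - Φ K M v| ≤ C K * |u - v| := by
    intro K hK
    filter_upwards [hUK K] with M hM
    exact (hΦfacts K M hK hM).2.1
  have hgclamp : ∀ K : ℕ, h < K → ∀ t : ℝ, g K t = g K (max x (min t (σ K))) := by
    intro K hK t
    refine tendsto_nhds_unique (hgtend K hK t) ?_
    have hmv : Tendsto (fun M => max x (min t (τ M K))) (U : Filter ℕ)
        (𝓝 (max x (min t (σ K)))) :=
      tendsto_const_nhds.max (tendsto_const_nhds.min (hσtend K))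
    have hT := tendsto_eval U (Φ K) (g K) (C K) (fun M => max x (min t (τ M K)))
      (max x (min t (σ K))) (hΦlipev K hK) (hgtend K hK) hmv
    refine hT.congr' ?_
    filter_upwards [hUK K] with M hM
    have h1 : max x (min t (τ M K)) ∈ Icc x (τ M K) := hΦclamp K M t
    show Φ K M (max x (min t (τ M K))) = Φ K M t
    have e1 : Φ K M (max x (min t (τ M K))) = φ M (max x (min t (τ M K))) :=
      (hΦfacts K M hK hM).2.2.1 _ h1
    rw [e1]
  have hgσ : ∀ K : ℕ, h < K → g K (σ K) = K := by
    intro K hK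
    have hT := tendsto_eval U (Φ K) (g K) (C K) (fun M => τ M K) (σ K)
      (hΦlipev K hK) (hgtend K hK) (hσtend K)
    have hconst : Tendsto (fun M => Φ K M (τ M K)) (U : Filter ℕ) (𝓝 ((K : ℕ) : ℝ)) := by
      refine Tendsto.congr' ?_ (tendsto_const_nhds (α := ℕ))
      filter_upwards [hUK K] with M hM
      exact (hΦτ K M hK hM).symm
    exact tendsto_nhds_unique hT hconst
  have hgcompat : ∀ K K' : ℕ, h < K → K ≤ K' →
      ∀ t : ℝ, g K t = g K' (max x (min t (σ K))) := by
    intro K K' hK hKK' t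
    have hK' : h < K' := lt_of_lt_of_le hK hKK'
    refine tendsto_nhds_unique (hgtend K hK t) ?_
    have hmv : Tendsto (fun M => max x (min t (τ M K))) (U : Filter ℕ)
        (𝓝 (max x (min t (σ K)))) :=
      tendsto_const_nhds.max (tendsto_const_nhds.min (hσtend K))
    have hT := tendsto_eval U (Φ K') (g K') (C K') (fun M => max x (min t (τ M K)))
      (max x (min t (σ K))) (hΦlipev K' hK') (hgtend K' hK') hmv
    refine hT.congr' ?_
    filter_upwards [hUK K'] with M hM
    exact (hΦcompat K K' M hK hKK' hM t).symm
  have hσmono : ∀ K K' : ℕ, K ≤ K' → σ K ≤ σ K' := fun K K' hKK' =>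
    le_of_tendsto_of_tendsto' (hσtend K) (hσtend K') (fun M => hτmono M K K' hKK')
  have hxσ : ∀ K, x ≤ σ K := fun K => le_trans hxxN (hσmem K).1
  have hσstrict : ∀ K K' : ℕ, h < K → K < K' → σ K < σ K' := by
    intro K K' hK hKK'
    rcases eq_or_lt_of_le (hσmono K K' hKK'.le) with heq | hlt
    · exfalso
      have h1 := hgcompat K K' hK hKK'.le (σ K)
      rw [min_self, max_eq_right (hxσ K), hgσ K hK] at h1
      rw [heq, hgσ K' (lt_of_lt_of_le hK hKK'.le)] at h1
      have : K = K' := by exact_mod_cast h1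
      omega
    · exact hlt
  -- uniform closeness of F along the stopped solutions (ultrafilter compactness)
  have hstar : ∀ K : ℕ, h < K → ∀ ε : ℝ, 0 < ε → ∀ᶠ M in (U : Filter ℕ),
      ∀ u ∈ Icc x L, |F (u, Φ K M u) - F (u, g K u)| ≤ ε := by
    intro K hK ε hε
    by_contra hcon
    have hev : ∀ᶠ M in (U : Filter ℕ),
        ¬ ∀ u ∈ Icc x L, |F (u, Φ K M u) - F (u, g K u)| ≤ ε :=
      (Ultrafilter.eventually_not (f := U)).2 hcon
    set uu : ℕ → ℝ := fun M =>
      if hM : ∃ u, u ∈ Icc x L ∧ ε < |F (u, Φ K M u) - F (u, g K u)| then hM.choose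
      else x with huud
    have hev' : ∀ᶠ M in (U : Filter ℕ), uu M ∈ Icc x L ∧
        ε < |F (uu M, Φ K M (uu M)) - F (uu M, g K (uu M))| := by
      filter_upwards [hev] with M hM
      have hM' : ∃ u, u ∈ Icc x L ∧ ε < |F (u, Φ K M u) - F (u, g K u)| := by
        push_neg at hM
        obtain ⟨u, hu1, hu2⟩ := hM
        exact ⟨u, hu1, hu2⟩
      have : uu M = hM'.choose := by simp only [huud]; rw [dif_pos hM']
      rw [this]
      exact hM'.choose_spec
    obtain ⟨ustar, hustar, hutend⟩ := ulim_exists U uu x L (hev'.mono fun M hM => hM.1)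
    have h1 : Tendsto (fun M => F (uu M, Φ K M (uu M))) (U : Filter ℕ)
        (𝓝 (F (ustar, g K ustar))) := by
      have hpair : Tendsto (fun M => ((uu M, Φ K M (uu M)) : ℝ × ℝ)) (U : Filter ℕ)
          (𝓝 (ustar, g K ustar)) :=
        hutend.prodMk_nhds (tendsto_eval U (Φ K) (g K) (C K) uu ustar
          (hΦlipev K hK) (hgtend K hK) hutend)
      exact (F.continuous.tendsto _).comp hpair
    have h2 : Tendsto (fun M => F (uu M, g K (uu M))) (U : Filter ℕ)
        (𝓝 (F (ustar, g K ustar))) := by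
      have hpair : Tendsto (fun M => ((uu M, g K (uu M)) : ℝ × ℝ)) (U : Filter ℕ)
          (𝓝 (ustar, g K ustar)) :=
        hutend.prodMk_nhds (((hgcont K hK).tendsto ustar).comp hutend)
      exact (F.continuous.tendsto _).comp hpair
    have h3 : Tendsto (fun M => |F (uu M, Φ K M (uu M)) - F (uu M, g K (uu M))|)
        (U : Filter ℕ) (𝓝 0) := by
      have := (h1.sub h2).abs
      simpa using this
    have : ε ≤ 0 := ge_of_tendsto h3 (by filter_upwards [hev'] with M hM; exact hM.2.le)
    linarith
  -- integral equation for the limit functions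
  have hgint : ∀ K : ℕ, h < K → ∀ s ∈ Icc x (σ K),
      g K s = y + ∫ u in x..s, F (u, g K u) := by
    intro K hK s hs
    have hsL : s ≤ L := le_trans hs.2 (hσmem K).2
    have hf_cont : Continuous (fun u => F (u, g K u)) :=
      F.continuous.comp (continuous_id.prodMk (hgcont K hK))
    have hmain : Tendsto (fun M => y + ∫ u in x..(min s (τ M K)), F (u, Φ K M u))
        (U : Filter ℕ) (𝓝 (y + ∫ u in x..s, F (u, g K u))) := by
      rw [Metric.tendsto_nhds]
      intro ε hε
      have hL0 : (0 : ℝ) ≤ L - x := by linarith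
      set ε₁ := ε / (2 * (L - x + 1)) with hε₁def
      have hε₁ : 0 < ε₁ := by
        apply div_pos hε; linarith
      set ε₂ := ε / (2 * (C K + 1)) with hε₂def
      have hε₂ : 0 < ε₂ := by
        apply div_pos hε; linarith [hC0 K]
      have hσev : ∀ᶠ M in (U : Filter ℕ), |τ M K - σ K| < ε₂ := by
        have h5 := Metric.tendsto_nhds.1 (hσtend K) ε₂ hε₂
        simpa [Real.dist_eq] using h5
      filter_upwards [hstar K hK ε₁ hε₁, hUK K, hσev] with M hM1 hM2 hM3
      set sM := min s (τ M K) with hsMdef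
      have hxsM : x ≤ sM := le_min hs.1 (hxτ M K)
      have hsML : sM ≤ L := le_trans (min_le_left _ _) hsL
      have hΦMc : Continuous (fun u => F (u, Φ K M u)) :=
        F.continuous.comp (continuous_id.prodMk (hΦcont K M))
      have hintΦ : IntervalIntegrable (fun u => F (u, Φ K M u))
          MeasureTheory.volume x sM := hΦMc.intervalIntegrable x sM
      have hintg1 : IntervalIntegrable (fun u => F (u, g K u))
          MeasureTheory.volume x sM := hf_cont.intervalIntegrable x sM
      have hintg2 : IntervalIntegrable (fun u => F (u, g K u))
          MeasureTheory.volume x s := hf_cont.intervalIntegrable x s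
      have hT1 : |(∫ u in x..sM, F (u, Φ K M u)) - ∫ u in x..sM, F (u, g K u)| ≤
          ε₁ * (L - x) := by
        rw [← intervalIntegral.integral_sub hintΦ hintg1]
        have hb : ∀ u ∈ Set.uIoc x sM, ‖F (u, Φ K M u) - F (u, g K u)‖ ≤ ε₁ := by
          intro u hu
          rw [uIoc_of_le hxsM] at hu
          rw [Real.norm_eq_abs]
          exact hM1 u ⟨hu.1.le, le_trans hu.2 hsML⟩
        have := intervalIntegral.norm_integral_le_of_norm_le_const hb
        rw [Real.norm_eq_abs] at this
        refine le_trans this ?_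
        rw [abs_of_nonneg (by linarith : (0:ℝ) ≤ sM - x)]
        exact mul_le_mul_of_nonneg_left (by linarith) hε₁.le
      have hsMs : sM ≤ s := min_le_left _ _
      have hT2 : |(∫ u in x..s, F (u, g K u)) - ∫ u in x..sM, F (u, g K u)| ≤
          C K * ε₂ := by
        rw [intervalIntegral.integral_interval_sub_left hintg2 hintg1]
        have hb : ∀ u ∈ Set.uIoc sM s, ‖F (u, g K u)‖ ≤ C K := by
          intro u hu
          rw [uIoc_of_le hsMs] at hu
          rw [Real.norm_eq_abs]
          exact hCb K u (g K u) ⟨le_trans hxsM hu.1.le, le_trans hu.2 hsL⟩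
            (hgmem K hK u)
        have h6 := intervalIntegral.norm_integral_le_of_norm_le_const hb
        rw [Real.norm_eq_abs] at h6
        refine le_trans h6 ?_
        have h7 : |s - sM| ≤ |σ K - τ M K| := by
          have h8 : s = min s (σ K) := (min_eq_left hs.2).symm
          calc |s - sM| = |min s (σ K) - min s (τ M K)| := by rw [← h8, ← hsMdef]
            _ ≤ |σ K - τ M K| := abs_min_sub_min_le _ _ _
        have h9 : |σ K - τ M K| < ε₂ := by rw [abs_sub_comm]; exact hM3
        exact mul_le_mul_of_nonneg_left (le_trans h7 h9.le) (hC0 K)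
      rw [Real.dist_eq]
      have hsplit : |(y + ∫ u in x..sM, F (u, Φ K M u)) -
          (y + ∫ u in x..s, F (u, g K u))| ≤ ε₁ * (L - x) + C K * ε₂ := by
        have htri : |(∫ u in x..sM, F (u, Φ K M u)) - ∫ u in x..s, F (u, g K u)| ≤
            |(∫ u in x..sM, F (u, Φ K M u)) - ∫ u in x..sM, F (u, g K u)| +
            |(∫ u in x..s, F (u, g K u)) - ∫ u in x..sM, F (u, g K u)| := by
          rw [abs_sub_comm (∫ u in x..s, F (u, g K u))]
          exact abs_sub_le _ _ _
        calc |(y + ∫ u in x..sM, F (u, Φ K M u)) - (y + ∫ u in x..s, F (u, g K u))|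
            = |(∫ u in x..sM, F (u, Φ K M u)) - ∫ u in x..s, F (u, g K u)| := by
              ring_nf
          _ ≤ _ := le_trans htri (add_le_add hT1 hT2)
      refine lt_of_le_of_lt hsplit ?_
      have hh1 : ε₁ * (L - x) < ε / 2 := by
        have : ε₁ * (L - x) < ε₁ * (L - x + 1) := by
          have := mul_lt_mul_of_pos_left (by linarith : L - x < L - x + 1) hε₁
          linarith [this]
        have he : ε₁ * (2 * (L - x + 1)) = ε := by
          rw [hε₁def]; exact div_mul_cancel₀ _ (by linarith)
        nlinarith [hε₁]
      have hh2 : C K * ε₂ < ε / 2 := by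
        have h10 : C K * ε₂ < (C K + 1) * ε₂ := by nlinarith [hε₂]
        have he : ε₂ * (2 * (C K + 1)) = ε := by
          rw [hε₂def]; exact div_mul_cancel₀ _ (by linarith [hC0 K])
        nlinarith [hε₂]
      exact (add_lt_add hh1 hh2).trans_le (by linarith)
    have hval2 : Tendsto (fun M => Φ K M s) (U : Filter ℕ)
        (𝓝 (y + ∫ u in x..s, F (u, g K u))) := by
      refine hmain.congr' ?_
      filter_upwards [hUK K] with M hM
      exact ((hΦfacts K M hK hM).2.2.2 s hs.1).symm
    exact tendsto_nhds_unique (hgtend K hK s) hval2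
  -- the blow-up time and limit solution
  have hbdd : BddAbove (range fun j : ℕ => σ (h + 1 + j)) := by
    refine ⟨L, ?_⟩; rintro _ ⟨j, rfl⟩; exact (hσmem _).2
  set ξ := ⨆ j : ℕ, σ (h + 1 + j) with hξdef
  have hKh : ∀ j : ℕ, h < h + 1 + j := fun j => by omega
  have hsigle : ∀ j : ℕ, σ (h + 1 + j) ≤ ξ := fun j => le_ciSup hbdd j
  have hξL : ξ ≤ L := ciSup_le fun j => (hσmem _).2
  have hsigstrict : ∀ j j' : ℕ, j < j' → σ (h + 1 + j) < σ (h + 1 + j') :=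
    fun j j' hj => hσstrict _ _ (hKh j) (by omega)
  have hξgt : xN < ξ :=
    lt_of_le_of_lt (hσmem (h + 1 + 0)).1 (lt_of_lt_of_le (hsigstrict 0 1 one_pos) (hsigle 1))
  have hxξ : x < ξ := lt_of_le_of_lt hxxN hξgt
  have hξLlt : ∀ t, t < ξ → ∃ j : ℕ, t < σ (h + 1 + j) := by
    intro t ht
    exact (lt_ciSup_iff hbdd).1 ht
  set ψ : ℝ → ℝ := fun t =>
    if hj : ∃ j : ℕ, t ≤ σ (h + 1 + j) then g (h + 1 + Nat.find hj) t else 0 with hψdef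
  have hcoh : ∀ j j' : ℕ, j ≤ j' → ∀ t, t ≤ σ (h + 1 + j) →
      g (h + 1 + j) t = g (h + 1 + j') t := by
    intro j j' hjj t ht
    have hKK : h + 1 + j ≤ h + 1 + j' := by omega
    have h1 := hgcompat (h + 1 + j) (h + 1 + j') (hKh j) hKK t
    rcases le_or_gt x t with hx | hx
    · rwa [min_eq_left ht, max_eq_right hx] at h1
    · rw [hgclamp _ (hKh j) t, hgclamp _ (hKh j') t,
        min_eq_left ht, min_eq_left (le_trans ht (hσmono _ _ hKK)),
        max_eq_left hx.le, hgx _ (hKh j), hgx _ (hKh j')]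
  have hψeq : ∀ (j : ℕ) (t : ℝ), t ≤ σ (h + 1 + j) → ψ t = g (h + 1 + j) t := by
    intro j t ht
    have hex : ∃ j' : ℕ, t ≤ σ (h + 1 + j') := ⟨j, ht⟩
    have h1 : ψ t = g (h + 1 + Nat.find hex) t := by
      simp only [hψdef]; rw [dif_pos hex]
    rw [h1]
    exact hcoh _ j (Nat.find_min' hex ht) t (Nat.find_spec hex)
  have hψx : ψ x = y := by
    rw [hψeq 0 x (le_trans hxxN (hσmem _).1), hgx _ (hKh 0)]
  have hψsup : SupNormLe ψ x (x + N) (h : ℝ) := by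
    intro t ht
    rw [hψeq 0 t (le_trans ht.2 (hσmem _).1)]
    exact hgh _ (hKh 0) t ht
  have hψint : ∀ j : ℕ, ∀ s ∈ Icc x (σ (h + 1 + j)),
      ψ s = y + ∫ u in x..s, F (u, ψ u) := by
    intro j s hs
    rw [hψeq j s hs.2, hgint (h + 1 + j) (hKh j) s hs]
    congr 1
    refine intervalIntegral.integral_congr ?_
    intro u hu
    rw [uIcc_of_le hs.1] at hu
    show F (u, g (h + 1 + j) u) = F (u, ψ u)
    rw [hψeq j u (le_trans hu.2 hs.2)]
  have hPsol : PSol F x y (ξ : EReal) ψ := by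
    refine ⟨by exact_mod_cast hxξ, hψx, ?_⟩
    intro t ht
    rw [Dom_coe] at ht ⊢
    obtain ⟨j, hj⟩ := hξLlt t ht.2
    have hc : Continuous (fun u => F (u, g (h + 1 + j) u)) :=
      F.continuous.comp (continuous_id.prodMk (hgcont _ (hKh j)))
    have hη : HasDerivAt (fun s => y + ∫ u in x..s, F (u, g (h + 1 + j) u))
        (F (t, g (h + 1 + j) t)) t :=
      ((hc.integral_hasStrictDerivAt x t).hasDerivAt).const_add y
    have hev : ψ =ᶠ[𝓝[Ico x ξ] t]
        (fun s => y + ∫ u in x..s, F (u, g (h + 1 + j) u)) := by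
      have hnb : Iio (σ (h + 1 + j)) ∈ 𝓝 t := Iio_mem_nhds hj
      filter_upwards [eventually_mem_nhdsWithin,
        eventually_nhdsWithin_of_eventually_nhds (eventually_mem_nhds_iff.2 hnb)] with s hs1 hs2
      have hs3 : s ∈ Icc x (σ (h + 1 + j)) := ⟨hs1.1, (mem_Iio.1 (mem_of_mem_nhds hs2)).le⟩
      rw [hψint j s hs3]
      congr 1
      refine intervalIntegral.integral_congr ?_
      intro u hu
      rw [uIcc_of_le hs3.1] at hu
      show F (u, ψ u) = F (u, g (h + 1 + j) u)
      rw [hψeq j u (le_trans hu.2 hs3.2)]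
    have hψt : ψ t = g (h + 1 + j) t := hψeq j t hj.le
    have hder := (hη.hasDerivWithinAt (s := Ico x ξ)).congr_of_eventuallyEq hev
      (by rw [hψeq j t hj.le, hgint _ (hKh j) t ⟨ht.1, hj.le⟩])
    rw [show F (t, ψ t) = F (t, g (h + 1 + j) t) by rw [hψt]]
    exact hder
  have hsigtend : Tendsto (fun j : ℕ => σ (h + 1 + j)) atTop (𝓝 ξ) :=
    tendsto_atTop_ciSup (fun j j' hj => hσmono _ _ (by omega)) hbdd
  have hblow : Tendsto ψ (𝓝[Iio ξ] ξ) atTop := by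
    rw [tendsto_atTop]
    intro A
    obtain ⟨n, hn⟩ := exists_nat_ge (A + 1)
    set CC := C (h + 1 + n) + 1 with hCCdef
    have hCC : 0 < CC := by
      have := hC0 (h + 1 + n); simp only [hCCdef]; linarith
    have hev2 : ∀ᶠ j : ℕ in atTop, ξ - 1/(2*CC) < σ (h + 1 + j) := by
      refine hsigtend.eventually (eventually_gt_nhds ?_)
      have : 0 < 1/(2*CC) := by positivity
      linarith
    obtain ⟨j₂, hj₂big, hj₂n⟩ := (hev2.and (eventually_ge_atTop n)).exists
    have hσj₂ξ : σ (h + 1 + j₂) < ξ :=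
      lt_of_lt_of_le (hsigstrict j₂ (j₂+1) (by omega)) (hsigle (j₂+1))
    have hclaim : ∀ t, σ (h + 1 + j₂) < t → t < ξ → A ≤ ψ t := by
      intro t hst htξ
      by_contra hcon
      push_neg at hcon
      have hex : ∃ j : ℕ, t < σ (h + 1 + j) := hξLlt t htξ
      set jf := Nat.find hex with hjfdef
      have hjf : t < σ (h + 1 + jf) := Nat.find_spec hex
      have hjfgt : j₂ < jf := by
        by_contra hcon2
        push_neg at hcon2
        have := hσmono (h + 1 + jf) (h + 1 + j₂) (by omega)
        linarith [hjf, hst]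
      set js := jf - 1 with hjsdef
      have hjsj₂ : j₂ ≤ js := by omega
      have hjsle : σ (h + 1 + js) ≤ t := by
        have h5 := Nat.find_min hex (show js < jf by omega)
        push_neg at h5
        exact h5
      have hsstar : σ (h + 1 + j₂) ≤ σ (h + 1 + js) := hσmono _ _ (by omega)
      -- abbreviations
      have hGt : g (h + 1 + jf) t = ψ t := (hψeq jf t hjf.le).symm
      have hstart : (A : ℝ) + 1 ≤ g (h + 1 + jf) (σ (h + 1 + js)) := by
        have h6 : σ (h + 1 + js) ≤ σ (h + 1 + jf) := hσmono _ _ (by omega)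
        have h7 : g (h + 1 + jf) (σ (h + 1 + js)) = g (h + 1 + js) (σ (h + 1 + js)) :=
          (hcoh js jf (by omega) _ (le_refl _)).symm
        rw [h7, hgσ _ (hKh js)]
        have h8 : (n : ℝ) ≤ ((h + 1 + js : ℕ) : ℝ) := by
          have : n ≤ h + 1 + js := by omega
          exact_mod_cast this
        linarith
      have hend : g (h + 1 + jf) t < A := by rw [hGt]; exact hcon
      set G := g (h + 1 + jf) with hGdef
      have hGcont : Continuous G := hgcont _ (hKh jf)
      set sstar := σ (h + 1 + js) with hsstardef
      have hxsstar : x ≤ sstar := hxσ _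
      have hsstart : sstar ≤ t := hjsle
      -- last time in [sstar, t] where G ≥ A+1
      set S1 := {v ∈ Icc sstar t | A + 1 ≤ G v} with hS1def
      have hS1ne : S1.Nonempty := ⟨sstar, ⟨le_refl _, hsstart⟩, hstart⟩
      have hS1bdd : BddAbove S1 := ⟨t, fun v hv => hv.1.2⟩
      have hS1closed : IsClosed S1 := by
        have : S1 = Icc sstar t ∩ G ⁻¹' Ici (A + 1) := by
          ext v; simp only [hS1def, mem_setOf_eq, mem_inter_iff, mem_preimage, mem_Ici,
            mem_sep_iff]
        rw [this]
        exact hGcont.continuousOn.preimage_isClosed_of_isClosed isClosed_Icc isClosed_Ici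
      set U0 := sSup S1 with hU0def
      have hU0mem : U0 ∈ S1 := hS1closed.csSup_mem hS1ne hS1bdd
      have hU0t : U0 ≤ t := hU0mem.1.2
      have hU0lt : U0 < t := by
        rcases lt_or_eq_of_le hU0t with h9 | h9
        · exact h9
        · exfalso; have := hU0mem.2; rw [h9] at this; linarith
      have hafter : ∀ v, U0 < v → v ≤ t → G v < A + 1 := by
        intro v hv1 hv2
        by_contra h9
        push_neg at h9
        have : v ∈ S1 := ⟨⟨le_trans hU0mem.1.1 hv1.le, hv2⟩, h9⟩
        exact absurd (le_csSup hS1bdd this) (not_le.2 hv1)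
      -- first time in [U0, t] where G ≤ A
      set S2 := {v ∈ Icc U0 t | G v ≤ A} with hS2def
      have hS2ne : S2.Nonempty := ⟨t, ⟨hU0t, le_refl _⟩, hend.le⟩
      have hS2bdd : BddBelow S2 := ⟨U0, fun v hv => hv.1.1⟩
      have hS2closed : IsClosed S2 := by
        have : S2 = Icc U0 t ∩ G ⁻¹' Iic A := by
          ext v; simp only [hS2def, mem_setOf_eq, mem_inter_iff, mem_preimage, mem_Iic,
            mem_sep_iff]
        rw [this]
        exact hGcont.continuousOn.preimage_isClosed_of_isClosed isClosed_Icc isClosed_Iic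
      set W := sInf S2 with hWdef
      have hWmem : W ∈ S2 := hS2closed.csInf_mem hS2ne hS2bdd
      have hU0W : U0 < W := by
        rcases lt_or_eq_of_le hWmem.1.1 with h9 | h9
        · exact h9
        · exfalso; have := hWmem.2; rw [← h9] at this; linarith [hU0mem.2]
      have hWt : W ≤ t := hWmem.1.2
      -- integral comparison
      have hσjfle : σ (h + 1 + jf) ≤ L := (hσmem _).2
      have hcontG : ContinuousOn (fun u => F (u, G u)) (Icc x (σ (h + 1 + jf))) :=
        (F.continuous.comp (continuous_id.prodMk hGcont)).continuousOn
      have hU0memIcc : U0 ∈ Icc x (σ (h + 1 + jf)) :=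
        ⟨le_trans hxsstar hU0mem.1.1, le_trans hU0t hjf.le⟩
      have hWmemIcc : W ∈ Icc x (σ (h + 1 + jf)) :=
        ⟨le_trans hU0memIcc.1 hU0W.le, le_trans hWt hjf.le⟩
      have hdiff : G W - G U0 = ∫ u in U0..W, F (u, G u) :=
        sol_diff_integral G (fun u => F (u, G u)) x y (σ (h + 1 + jf)) hcontG
          (hgint _ (hKh jf)) W hWmemIcc U0 hU0memIcc
      have hbound : ∀ u ∈ Set.uIoc U0 W, ‖F (u, G u)‖ ≤ CC := by
        intro u hu
        rw [uIoc_of_le hU0W.le] at hu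
        rw [Real.norm_eq_abs]
        have hu1 : u ∈ Icc x L :=
          ⟨le_trans hU0memIcc.1 hu.1.le, le_trans hu.2 (le_trans hWt (le_trans htξ.le hξL))⟩
        have hu2 : G u ∈ Icc bR ((h + 1 + n : ℕ) : ℝ) := by
          constructor
          · exact (hgmem _ (hKh jf) u).1
          · have h10 : G u ≤ A + 1 := by
              rcases lt_or_eq_of_le hu.2 with h11 | h11
              · exact (hafter u hu.1 (le_trans h11.le hWt)).le
              · rw [h11]; linarith [hWmem.2]
            have h11 : (A : ℝ) + 1 ≤ ((h + 1 + n : ℕ) : ℝ) := by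
              have h12 : (n : ℝ) ≤ ((h + 1 + n : ℕ) : ℝ) := by
                have : n ≤ h + 1 + n := by omega
                exact_mod_cast this
              linarith
            linarith
        have := hCb (h + 1 + n) u (G u) hu1 hu2
        simp only [hCCdef]
        linarith
      have hintbound := intervalIntegral.norm_integral_le_of_norm_le_const hbound
      rw [← hdiff, Real.norm_eq_abs] at hintbound
      have h13 : (1 : ℝ) ≤ G U0 - G W := by
        have := hU0mem.2; have := hWmem.2; linarith
      have h14 : |G W - G U0| ≥ 1 := by
        rw [abs_sub_comm]
        exact le_trans h13 (le_abs_self _)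
      have h15 : |W - U0| = W - U0 := abs_of_nonneg (by linarith)
      have h16 : W - U0 ≤ t - sstar := by
        have := hU0mem.1.1; linarith
      have h17 : t - sstar < 1/(2*CC) := by
        have h18 : ξ - 1/(2*CC) < σ (h + 1 + j₂) := hj₂big
        have h19 : σ (h + 1 + j₂) ≤ sstar := hsstar
        linarith
      have h20 : CC * (t - sstar) < CC * (1/(2*CC)) :=
        mul_lt_mul_of_pos_left h17 hCC
      have h21 : CC * (1/(2*CC)) = 1/2 := by field_simp
      have h22 : CC * |W - U0| ≤ CC * (t - sstar) := by
        rw [h15]; exact mul_le_mul_of_nonneg_left h16 hCC.le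
      have h23 : CC * (t - sstar) < 1/2 := by rw [← h21]; exact h20
      have h24 : (1:ℝ) < 1/2 :=
        lt_of_le_of_lt (le_trans h14 (le_trans hintbound h22)) h23
      norm_num at h24
    refine eventually_iff.2 ?_
    exact (mem_nhdsLT_iff_exists_Ioo_subset' hσj₂ξ).2
      ⟨σ (h + 1 + j₂), hσj₂ξ, fun t ht => hclaim t ht.1 ht.2⟩
  exact ⟨ξ, ψ, hξgt, solPlus_of_blowup F x y ξ ψ hPsol hblow,
    by rw [LimPlusTop, leftLim_coe]; exact hblow, hψsup⟩

lemma fwd (N h : ℕ) : Aplus N h ⊆ ⋃ (b : ℚ) (l : ℚ), ⋂ (M : ℕ), Dset N h M b l := by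
  rintro ⟨F, x, y⟩ ⟨ξ, φ, hξ, hS, hT, hB⟩
  have hT' : Tendsto φ (𝓝[Iio ξ] ξ) atTop := by rwa [LimPlusTop, leftLim_coe] at hT
  have hxN : x ≤ x + N := by
    have : (0:ℝ) ≤ N := Nat.cast_nonneg N
    linarith
  have hxξ : x < ξ := lt_of_le_of_lt hxN hξ
  have h0 : {t : ℝ | 0 ≤ φ t} ∈ 𝓝[Iio ξ] ξ := hT'.eventually_ge_atTop 0
  obtain ⟨s₀', hs₀', hsub'⟩ := (mem_nhdsLT_iff_exists_Ioo_subset' hxξ).1 h0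
  set s₀ := max x s₀' with hs₀def
  have hs₀lt : s₀ < ξ := max_lt hxξ hs₀'
  have hsub : Ioo s₀ ξ ⊆ {t : ℝ | 0 ≤ φ t} := fun t ht =>
    hsub' ⟨lt_of_le_of_lt (le_max_right _ _) ht.1, ht.2⟩
  have hs₀ξ : (s₀ : EReal) < (ξ : EReal) := by exact_mod_cast hs₀lt
  have hcont : ContinuousOn φ (Icc x s₀) := psol_continuousOn F x y ξ φ hS.1 s₀ hs₀ξ
  obtain ⟨t₀, ht₀, hmin⟩ :=
    isCompact_Icc.exists_isMinOn ⟨x, le_refl x, le_max_left _ _⟩ hcont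
  set B := min (φ t₀) 0 with hB'
  have hlow : ∀ t ∈ Ico x ξ, B ≤ φ t := by
    intro t ht
    rcases le_or_gt t s₀ with h1 | h1
    · exact le_trans (min_le_left _ _) (hmin ⟨ht.1, h1⟩)
    · exact le_trans (min_le_right _ _) (hsub ⟨h1, ht.2⟩)
  obtain ⟨b, hb⟩ := exists_rat_lt B
  obtain ⟨l, hl⟩ := exists_rat_gt (ξ - (x + N))
  refine mem_iUnion.2 ⟨b, mem_iUnion.2 ⟨l, mem_iInter.2 fun M => ?_⟩⟩
  have hM : {t : ℝ | (M : ℝ) ≤ φ t} ∈ 𝓝[Iio ξ] ξ := hT'.eventually_ge_atTop (M : ℝ)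
  obtain ⟨s₁', hs₁', hsub₁'⟩ := (mem_nhdsLT_iff_exists_Ioo_subset' hξ).1 hM
  set s₁ := max (x + N) s₁' with hs₁def
  have hs₁lt : s₁ < ξ := max_lt hξ hs₁'
  have hsub₁ : Ioo s₁ ξ ⊆ {t : ℝ | (M : ℝ) ≤ φ t} := fun t ht =>
    hsub₁' ⟨lt_of_le_of_lt (le_max_right _ _) ht.1, ht.2⟩
  set r := (s₁ + ξ) / 2 with hr
  have hrmem : r ∈ Ioo s₁ ξ := ⟨by rw [hr]; linarith, by rw [hr]; linarith⟩
  have hrN : x + N ≤ r := le_trans (le_max_left _ _) hrmem.1.le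
  have hrξ : r < ξ := hrmem.2
  refine ⟨r, (ξ : EReal), φ, hS, hrN, by linarith [hl], hB, by exact_mod_cast hrξ, ?_, hsub₁ hrmem⟩
  intro t ht
  exact le_trans hb.le (hlow t ⟨ht.1, lt_of_le_of_lt ht.2 hrξ⟩)

/-- Equation (*) in the proof of lemma 5.19(a): for all `N, h ∈ ℕ`,
`A⁺_{N,h} = ⋃_{b,ℓ∈ℚ} ⋂_{M∈ℕ} D^M_{b,ℓ}`. -/
theorem statement10 (N h : ℕ) :
    Aplus N h = ⋃ (b : ℚ) (l : ℚ), ⋂ (M : ℕ), Dset N h M b l := by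
  refine Set.Subset.antisymm (fwd N h) ?_
  rintro ⟨F, x, y⟩ hmem
  simp only [mem_iUnion, mem_iInter] at hmem
  obtain ⟨bq, lq, hD⟩ := hmem
  simp only [Dset, mem_setOf_eq] at hD
  choose r c φ h1 h2 h3 h4 h5 h6 h7 using hD
  obtain ⟨ξ, ψ, hgt, hsol, hlim, hsup⟩ :=
    bwd_main N h F x y bq lq r c φ (fun M => (h1 M).1) h2 h3 h4 h5 h6 h7
  exact ⟨ξ, ψ, hgt, hsol, hlim, hsup⟩
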